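/- arXiv:math/0311235 — 5 statements merged into one kernel-verified Lean document; each statement's English description precedes it below -/
import Mathlib

section
/- For every natural number k and every j with 0 ≤ j ≤ k, the following identity of rational numbers holds: (j!/k!) · ∑ t₁t₂⋯t_{k−j} = ∑ 1/(i₁i₂⋯i_j), where the left-hand sum runs over all strictly increasing sequences 0 < t₁ < t₂ < ⋯ < t_{k−j} < k of integers (equivalently, over all subsets of {1,…,k−1} of cardinality k−j, the summand being the product of the elements), and the right-hand sum runs over all ordered j-tuples (i₁,…,i_j) of positive integers with i₁+⋯+i_j = k. -/
/-!
Both sides equal `j! / k!` times the unsigned Stirling number of the first kind `c(k, j)`.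
The left sum is the elementary symmetric function `e_{k-j}(1, …, k-1)`, which by Vieta's formula
is the coefficient of `X^j` in the rising factorial `X (X + 1) ⋯ (X + k - 1)`, that is `c(k, j)`.
On the right, let `r(j, n)` be the sum of `1/(i₁⋯i_j)` over compositions of `n` into `j` parts.
Writing `n = i₁ + ⋯ + i_{j+1}` and cancelling each part against its own reciprocal gives
`n · r(j+1, n) = (j+1) · ∑_{b<n} r(j, b)` (coefficientwise, `(1 - x) (F^{j+1})' = (j+1) F^j` for
`F = -log(1 - x)`), so `n! · r(j, n) / j!` satisfies the Stirling recurrence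
`c(n+1, j+1) = n · c(n, j+1) + c(n, j)`.
-/

open Finset Polynomial Nat

namespace Finset

variable {μ M : Type*} [AddCommMonoid μ] [HasAntidiagonal μ] [DecidableEq μ] [AddCommMonoid M]

theorem sum_finAntidiagonal_succ (d : ℕ) (n : μ) (g : (Fin (d + 1) → μ) → M) :
    ∑ f ∈ finAntidiagonal (d + 1) n, g f =
      ∑ p ∈ antidiagonal n, ∑ t ∈ finAntidiagonal d p.2, g (Fin.cons p.1 t) := by
  rw [finAntidiagonal, finAntidiagonal.aux, sum_disjiUnion]
  simp only [sum_map]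
  rfl

theorem sum_finAntidiagonal_comp_perm {d : ℕ} (n : μ) (σ : Equiv.Perm (Fin d))
    (g : (Fin d → μ) → M) :
    ∑ f ∈ finAntidiagonal d n, g (f ∘ σ) = ∑ f ∈ finAntidiagonal d n, g f := by
  refine sum_nbij' (· ∘ σ) (· ∘ σ.symm) ?_ ?_ ?_ ?_ (fun _ _ => rfl) <;>
    simp [Function.comp_def, Equiv.sum_comp]

theorem sum_powersetCard_prod_of_subset {α R : Type*} [CommSemiring R] {s t : Finset α}
    {f : α → R} (hst : s ⊆ t) (hf : ∀ i ∈ t, i ∉ s → f i = 0) (m : ℕ) :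
    ∑ A ∈ powersetCard m s, ∏ i ∈ A, f i = ∑ A ∈ powersetCard m t, ∏ i ∈ A, f i := by
  refine sum_subset (powersetCard_mono hst) fun A hAt hAs => ?_
  rw [mem_powersetCard] at hAt hAs
  obtain ⟨i, hiA, his⟩ := not_subset.1 fun h => hAs ⟨h, hAt.2⟩
  exact prod_eq_zero hiA (hf i (hAt.1 hiA) his)

end Finset

theorem coeff_ascPochhammer_nat (n j : ℕ) :
    (ascPochhammer ℕ n).coeff j = stirlingFirst n j := by
  induction n generalizing j with
  | zero => cases j <;> simp [coeff_one]
  | succ n ih =>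
    rw [ascPochhammer_succ_right, mul_add, coeff_add, coeff_mul_natCast]
    cases j with
    | zero => cases n <;> simp [ih]
    | succ j => rw [coeff_mul_X, ih, ih, stirlingFirst_succ_succ, Nat.cast_id]; ring

theorem ascPochhammer_nat_eq_prod_range (n : ℕ) :
    ascPochhammer ℕ n = ∏ i ∈ range n, (X + C i) := by
  induction n with
  | zero => simp
  | succ n ih => rw [ascPochhammer_succ_right, ih, prod_range_succ, ← C_eq_natCast, Nat.cast_id]

theorem sum_powersetCard_range_prod {n j : ℕ} (hj : j ≤ n) :
    ∑ A ∈ powersetCard (n - j) (range n), ∏ i ∈ A, i = stirlingFirst n j := by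
  rw [← coeff_ascPochhammer_nat, ascPochhammer_nat_eq_prod_range,
    prod_X_add_C_coeff _ _ (by simpa using hj), card_range]

theorem sum_powersetCard_Icc_prod {n j : ℕ} (hj : j ≤ n) :
    ∑ A ∈ powersetCard (n - j) (Icc 1 (n - 1)), ∏ i ∈ A, i = stirlingFirst n j := by
  rw [sum_powersetCard_prod_of_subset (t := range n)]
  · exact sum_powersetCard_range_prod hj
  · intro i
    simp only [mem_Icc, mem_range]
    omega
  · intro i hi hi'
    simp only [mem_Icc, mem_range] at hi hi'
    omega

/-- Tuples with a zero entry contribute nothing, since `(0 : ℚ)⁻¹ = 0`: this is the sum of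
`1 / (i₁ ⋯ i_j)` over the compositions of `n` into `j` positive parts. -/
def invProdSum (j n : ℕ) : ℚ :=
  ∑ f ∈ finAntidiagonal j n, ∏ i, (f i : ℚ)⁻¹

theorem invProdSum_zero_left (n : ℕ) : invProdSum 0 n = if n = 0 then 1 else 0 := by
  split_ifs with hn
  · subst hn
    rw [invProdSum, sum_eq_single_of_mem 0 (by simp)] <;> simp
  · rw [invProdSum, sum_eq_zero]
    simp [Ne.symm hn]

theorem invProdSum_eq_zero_of_lt {j n : ℕ} (h : n < j) : invProdSum j n = 0 := by
  refine sum_eq_zero fun f hf => prod_eq_zero_iff.2 ?_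
  by_contra! hpos
  have hsum : ∑ _i : Fin j, 1 ≤ ∑ i, f i :=
    sum_le_sum fun i _ => Nat.one_le_iff_ne_zero.2 (by simpa using hpos i (mem_univ i))
  simp [mem_finAntidiagonal.1 hf] at hsum
  omega

theorem sum_compositions_eq_invProdSum (j k : ℕ) :
    ∑ f ∈ (Fintype.piFinset fun _ : Fin j => Icc 1 k).filter (fun f => ∑ i, f i = k),
        ∏ i, (1 : ℚ) / (f i : ℚ) = invProdSum j k := by
  simp only [one_div, invProdSum]
  refine sum_subset (fun f hf => mem_finAntidiagonal.2 (mem_filter.1 hf).2) fun f hf hf' => ?_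
  have hsum := mem_finAntidiagonal.1 hf
  obtain ⟨i, hi⟩ : ∃ i, f i ∉ Icc 1 k := by
    by_contra! h
    exact hf' (mem_filter.2 ⟨Fintype.mem_piFinset.2 h, hsum⟩)
  have hle : f i ≤ k := hsum ▸ single_le_sum (fun _ _ => Nat.zero_le _) (mem_univ i)
  have hzero : f i = 0 := by
    rw [mem_Icc] at hi
    omega
  exact prod_eq_zero (mem_univ i) (by simp [hzero])

theorem sum_head_mul_prod_inv (j n : ℕ) :
    ∑ f ∈ finAntidiagonal (j + 1) n, (f 0 : ℚ) * ∏ i, (f i : ℚ)⁻¹ =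
      ∑ b ∈ range n, invProdSum j b := by
  rw [sum_finAntidiagonal_succ, ← Nat.sum_antidiagonal_swap,
    Nat.sum_antidiagonal_eq_sum_range_succ_mk, sum_range_succ]
  simp only [Fin.prod_univ_succ, Fin.cons_zero, Fin.cons_succ, ← mul_assoc, ← mul_sum, Prod.swap]
  rw [Nat.sub_self, Nat.cast_zero, zero_mul, zero_mul, add_zero]
  refine sum_congr rfl fun b hb => ?_
  have hb : (n - b : ℕ) ≠ 0 := by
    rw [mem_range] at hb
    omega
  rw [mul_inv_cancel₀ (Nat.cast_ne_zero.2 hb), one_mul, invProdSum]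

theorem natCast_mul_invProdSum_succ (j n : ℕ) :
    (n : ℚ) * invProdSum (j + 1) n = (j + 1) * ∑ b ∈ range n, invProdSum j b := by
  have hsymm (s : Fin (j + 1)) :
      ∑ f ∈ finAntidiagonal (j + 1) n, (f s : ℚ) * ∏ i, (f i : ℚ)⁻¹ =
        ∑ f ∈ finAntidiagonal (j + 1) n, (f 0 : ℚ) * ∏ i, (f i : ℚ)⁻¹ := by
    rw [← sum_finAntidiagonal_comp_perm n (Equiv.swap 0 s)]
    refine sum_congr rfl fun f _ => ?_
    simp only [Function.comp_apply, Equiv.swap_apply_right]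
    rw [Equiv.prod_comp (Equiv.swap 0 s) fun i => (f i : ℚ)⁻¹]
  calc (n : ℚ) * invProdSum (j + 1) n
      = ∑ f ∈ finAntidiagonal (j + 1) n, (∑ s, (f s : ℚ)) * ∏ i, (f i : ℚ)⁻¹ := by
        rw [invProdSum, mul_sum]
        refine sum_congr rfl fun f hf => ?_
        rw [← Nat.cast_sum, mem_finAntidiagonal.1 hf]
    _ = ∑ s, ∑ f ∈ finAntidiagonal (j + 1) n, (f s : ℚ) * ∏ i, (f i : ℚ)⁻¹ := by
        simp only [sum_mul]
        exact sum_comm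
    _ = (j + 1) * ∑ b ∈ range n, invProdSum j b := by
        rw [sum_congr rfl fun s _ => hsymm s, sum_const, Finset.card_univ, Fintype.card_fin,
          sum_head_mul_prod_inv, nsmul_eq_mul]
        push_cast
        rfl

theorem invProdSum_succ_succ (j n : ℕ) :
    (n + 1) * invProdSum (j + 1) (n + 1) =
      n * invProdSum (j + 1) n + (j + 1) * invProdSum j n := by
  have h := natCast_mul_invProdSum_succ j (n + 1)
  rw [sum_range_succ, mul_add, ← natCast_mul_invProdSum_succ] at h
  push_cast at h
  exact h

theorem factorial_mul_invProdSum (j n : ℕ) :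
    (n ! : ℚ) * invProdSum j n = j ! * stirlingFirst n j := by
  induction n generalizing j with
  | zero =>
    cases j with
    | zero => simp [invProdSum_zero_left]
    | succ j => simp [invProdSum_eq_zero_of_lt]
  | succ n ih =>
    cases j with
    | zero => simp [invProdSum_zero_left]
    | succ j =>
      have ih_succ := ih (j + 1)
      rw [stirlingFirst_succ_succ]
      push_cast [Nat.factorial_succ] at ih_succ ⊢
      linear_combination (n ! : ℚ) * invProdSum_succ_succ j n + n * ih_succ + (j + 1) * ih j

/-- Combinatorial identity: `(j!/k!) · ∑_{0<t₁<⋯<t_{k−j}<k} t₁⋯t_{k−j}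
  = ∑_{i₁+⋯+i_j=k, iₛ ≥ 1} 1/(i₁⋯i_j)`.  The left sum runs over subsets of
  `{1,…,k−1}` of cardinality `k−j`; the right sum over ordered `j`-tuples of
  positive integers summing to `k` (each entry automatically lies in `[1,k]`). -/
theorem combinatorial_identity (k j : ℕ) (hj : j ≤ k) :
    (j.factorial : ℚ) / (k.factorial : ℚ) *
        ∑ A ∈ Finset.powersetCard (k - j) (Finset.Icc 1 (k - 1)), ∏ t ∈ A, (t : ℚ)
      = ∑ f ∈ (Fintype.piFinset fun _ : Fin j => Finset.Icc 1 k).filter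
            (fun f => ∑ i, f i = k),
          ∏ i, (1 : ℚ) / (f i : ℚ) := by
  have hL : ∑ A ∈ powersetCard (k - j) (Icc 1 (k - 1)), ∏ t ∈ A, (t : ℚ) = stirlingFirst k j := by
    rw [← sum_powersetCard_Icc_prod hj]
    push_cast
    rfl
  rw [hL, sum_compositions_eq_invProdSum, div_mul_eq_mul_div, ← factorial_mul_invProdSum,
    mul_div_cancel_left₀ _ (by positivity)]
end

section
/- Let N and j be positive integers. Let S = {(w₁,…,w_j) ∈ (ℤ₊)^j : w₁+⋯+w_j ≤ N} and T = {(w₁,…,w_j) ∈ (ℤ₊)^j : w₁,…,w_j are pairwise distinct and each w_i ≤ N}. Then ∑_{(w₁,…,w_j)∈S} 1/(w₁⋯w_j) = ∑_{(w₁,…,w_j)∈T} 1/(w₁⋯w_j), as an identity of rational numbers. -/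
open Finset

private def SA (j N : ℕ) : Finset (Fin j → ℕ) :=
  (Fintype.piFinset fun _ : Fin j => Finset.Icc 1 N).filter (fun f => ∑ i, f i ≤ N)

private def SB (j N : ℕ) : Finset (Fin j → ℕ) :=
  (Fintype.piFinset fun _ : Fin j => Finset.Icc 1 N).filter (fun f => Function.Injective f)

private def A (j N : ℕ) : ℚ := ∑ f ∈ SA j N, ∏ i, (1 : ℚ) / (f i : ℚ)
private def B (j N : ℕ) : ℚ := ∑ f ∈ SB j N, ∏ i, (1 : ℚ) / (f i : ℚ)

private lemma mem_SA {j N : ℕ} {f : Fin j → ℕ} :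
    f ∈ SA j N ↔ (∀ i, 1 ≤ f i ∧ f i ≤ N) ∧ ∑ i, f i ≤ N := by
  simp [SA, Fintype.mem_piFinset, Finset.mem_Icc, Finset.mem_filter]

private lemma mem_SB {j N : ℕ} {f : Fin j → ℕ} :
    f ∈ SB j N ↔ (∀ i, 1 ≤ f i ∧ f i ≤ N) ∧ Function.Injective f := by
  simp [SB, Fintype.mem_piFinset, Finset.mem_Icc, Finset.mem_filter]

private lemma insertNth_injective {j v : ℕ} (i : Fin (j + 1)) (g : Fin j → ℕ)
    (hg : Function.Injective g) (hne : ∀ k, g k ≠ v) :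
    Function.Injective (i.insertNth v g) := by
  intro a b hab
  by_cases ha : a = i
  · by_cases hb : b = i
    · rw [ha, hb]
    · exfalso
      obtain ⟨k, hk⟩ := Fin.exists_succAbove_eq hb
      rw [ha, Fin.insertNth_apply_same, ← hk, Fin.insertNth_apply_succAbove] at hab
      exact hne k hab.symm
  · obtain ⟨k, hk⟩ := Fin.exists_succAbove_eq ha
    by_cases hb : b = i
    · exfalso
      rw [hb, Fin.insertNth_apply_same, ← hk, Fin.insertNth_apply_succAbove] at hab
      exact hne k hab
    · obtain ⟨l, hl⟩ := Fin.exists_succAbove_eq hb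
      rw [← hk, ← hl, Fin.insertNth_apply_succAbove, Fin.insertNth_apply_succAbove] at hab
      rw [← hk, ← hl, hg hab]

private lemma A_step (j N : ℕ) :
    A (j + 1) (N + 1) = A (j + 1) N + ((j + 1 : ℚ) / (N + 1)) * A j N := by
  classical
  have hsplit := Finset.sum_filter_add_sum_filter_not (SA (j+1) (N+1))
    (fun f => ∑ i, f i ≤ N) (fun f => ∏ i, (1:ℚ)/(f i : ℚ))
  have h1 : (SA (j+1) (N+1)).filter (fun f => ∑ i, f i ≤ N) = SA (j+1) N := by
    ext f
    simp only [Finset.mem_filter, mem_SA]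
    constructor
    · rintro ⟨⟨hr, _⟩, hs⟩
      refine ⟨fun i => ⟨(hr i).1, ?_⟩, hs⟩
      calc f i ≤ ∑ k, f k :=
            Finset.single_le_sum (fun k _ => Nat.zero_le _) (Finset.mem_univ i)
        _ ≤ N := hs
    · rintro ⟨hr, hs⟩
      exact ⟨⟨fun i => ⟨(hr i).1, (hr i).2.trans (Nat.le_succ N)⟩, hs.trans (Nat.le_succ N)⟩, hs⟩
  set E := (SA (j+1) (N+1)).filter (fun f => ¬ ∑ i, f i ≤ N) with hE
  have hsumE : ∀ f ∈ E, ∑ i, f i = N + 1 := by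
    intro f hf
    obtain ⟨hfm, hfs⟩ := Finset.mem_filter.mp hf
    have := (mem_SA.mp hfm).2
    omega
  have hposE : ∀ f ∈ E, ∀ i, 1 ≤ f i ∧ f i ≤ N + 1 := fun f hf =>
    (mem_SA.mp (Finset.mem_filter.mp hf).1).1
  -- rewrite each summand
  have key : ∀ f ∈ E, (∏ i, (1:ℚ)/(f i : ℚ))
      = (1/((N:ℚ)+1)) * ∑ i : Fin (j+1), ∏ k, (1:ℚ)/(f (i.succAbove k) : ℚ) := by
    intro f hf
    have hstep : ∀ i : Fin (j+1), (∏ k, (1:ℚ)/(f (i.succAbove k) : ℚ))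
        = (f i : ℚ) * ∏ l, (1:ℚ)/(f l : ℚ) := by
      intro i
      have hfi : (f i : ℚ) ≠ 0 := by
        have := (hposE f hf i).1
        exact Nat.cast_ne_zero.mpr (by omega)
      rw [Fin.prod_univ_succAbove (fun l => (1:ℚ)/(f l : ℚ)) i, ← mul_assoc,
        mul_one_div, div_self hfi, one_mul]
    rw [Finset.sum_congr rfl (fun i _ => hstep i), ← Finset.sum_mul]
    have hcast : (∑ i : Fin (j+1), (f i : ℚ)) = (N : ℚ) + 1 := by
      have := hsumE f hf
      exact_mod_cast this
    rw [hcast]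
    have : ((N:ℚ)+1) ≠ 0 := by positivity
    field_simp
  have hEsum : ∑ f ∈ E, ∏ i, (1:ℚ)/(f i : ℚ)
      = (1/((N:ℚ)+1)) * ∑ i : Fin (j+1), ∑ f ∈ E, ∏ k, (1:ℚ)/(f (i.succAbove k) : ℚ) := by
    rw [Finset.sum_congr rfl key, ← Finset.mul_sum, Finset.sum_comm]
  have hinner : ∀ i : Fin (j+1),
      (∑ f ∈ E, ∏ k, (1:ℚ)/(f (i.succAbove k) : ℚ)) = A j N := by
    intro i
    rw [A]
    refine Finset.sum_nbij' (fun f => Fin.removeNth i f)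
      (fun g => i.insertNth (N + 1 - ∑ k, g k) g) ?_ ?_ ?_ ?_ ?_
    · intro f hf
      have hsum := hsumE f hf
      have hpos := hposE f hf
      have hdecomp := Fin.sum_univ_succAbove f i
      refine mem_SA.mpr ⟨fun k => ⟨(hpos _).1, ?_⟩, ?_⟩
      · calc (Fin.removeNth i f) k ≤ ∑ l, f (i.succAbove l) :=
              Finset.single_le_sum (fun l _ => Nat.zero_le _) (Finset.mem_univ k)
          _ ≤ N := by have := (hpos i).1; omega
      · show (∑ k, f (i.succAbove k)) ≤ N
        have := (hpos i).1; omega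
    · intro g hg
      obtain ⟨hr, hs⟩ := mem_SA.mp hg
      have hv : 1 ≤ N + 1 - ∑ k, g k ∧ N + 1 - ∑ k, g k ≤ N + 1 := by omega
      have hsum : (∑ a, i.insertNth (N + 1 - ∑ k, g k) g a) = N + 1 := by
        rw [Fin.sum_univ_succAbove (i.insertNth (N + 1 - ∑ k, g k) g) i]
        simp only [Fin.insertNth_apply_same, Fin.insertNth_apply_succAbove]
        omega
      refine Finset.mem_filter.mpr ⟨mem_SA.mpr ⟨?_, ?_⟩, ?_⟩
      · intro a
        by_cases ha : a = i
        · rw [ha]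
          simp only [Fin.insertNth_apply_same]
          omega
        · obtain ⟨k, hk⟩ := Fin.exists_succAbove_eq ha
          rw [← hk]
          simp only [Fin.insertNth_apply_succAbove]
          exact ⟨(hr k).1, (hr k).2.trans (Nat.le_succ N)⟩
      · show (∑ a, i.insertNth (N + 1 - ∑ k, g k) g a) ≤ N + 1
        omega
      · show ¬ (∑ a, i.insertNth (N + 1 - ∑ k, g k) g a) ≤ N
        omega
    · intro f hf
      have : N + 1 - ∑ k, Fin.removeNth i f k = f i := by
        have hdecomp := Fin.sum_univ_succAbove f i
        have hsum := hsumE f hf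
        simp only [Fin.removeNth]
        omega
      beta_reduce
      rw [this]
      exact Fin.insertNth_self_removeNth i f
    · intro g hg
      simp
    · intro f hf
      rfl
  rw [show A (j+1) (N+1) = ∑ f ∈ SA (j+1) (N+1), ∏ i, (1:ℚ)/(f i : ℚ) from rfl,
    ← hsplit, h1, hEsum, Finset.sum_congr rfl (fun i _ => hinner i),
    Finset.sum_const, Finset.card_univ, Fintype.card_fin, nsmul_eq_mul]
  rw [show (∑ f ∈ SA (j+1) N, ∏ i, (1:ℚ)/(f i : ℚ)) = A (j+1) N from rfl]
  push_cast
  ring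

private lemma B_step (j N : ℕ) :
    B (j + 1) (N + 1) = B (j + 1) N + ((j + 1 : ℚ) / (N + 1)) * B j N := by
  classical
  have hsplit := Finset.sum_filter_add_sum_filter_not (SB (j+1) (N+1))
    (fun f => ∀ i, f i ≤ N) (fun f => ∏ i, (1:ℚ)/(f i : ℚ))
  have h1 : (SB (j+1) (N+1)).filter (fun f => ∀ i, f i ≤ N) = SB (j+1) N := by
    ext f
    simp only [Finset.mem_filter, mem_SB]
    constructor
    · rintro ⟨⟨ha, hb⟩, hc⟩
      exact ⟨fun i => ⟨(ha i).1, hc i⟩, hb⟩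
    · rintro ⟨ha, hb⟩
      exact ⟨⟨fun i => ⟨(ha i).1, (ha i).2.trans (Nat.le_succ N)⟩, hb⟩, fun i => (ha i).2⟩
  have h2 : (SB (j+1) (N+1)).filter (fun f => ¬ ∀ i, f i ≤ N)
      = Finset.univ.biUnion (fun i : Fin (j+1) =>
          (SB (j+1) (N+1)).filter (fun f => f i = N + 1)) := by
    ext f
    simp only [Finset.mem_filter, Finset.mem_biUnion, Finset.mem_univ, true_and]
    constructor
    · rintro ⟨hf, hne⟩
      push_neg at hne
      obtain ⟨i, hi⟩ := hne
      have := (mem_SB.mp hf).1 i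
      exact ⟨i, hf, by omega⟩
    · rintro ⟨i, hf, hi⟩
      exact ⟨hf, fun h => by have := h i; omega⟩
  have hdisj : (↑(Finset.univ : Finset (Fin (j+1))) : Set (Fin (j+1))).PairwiseDisjoint
      (fun i => (SB (j+1) (N+1)).filter (fun f => f i = N + 1)) := by
    intro i _ i' _ hii'
    simp only [Function.onFun]
    rw [Finset.disjoint_left]
    intro f hf hf'
    have ha := (Finset.mem_filter.mp hf).2
    have hb := (Finset.mem_filter.mp hf').2
    have hinj := (mem_SB.mp (Finset.mem_filter.mp hf).1).2
    exact hii' (hinj (ha.trans hb.symm))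
  have hpiece : ∀ i : Fin (j+1),
      ∑ f ∈ (SB (j+1) (N+1)).filter (fun f => f i = N + 1), ∏ k, (1:ℚ)/(f k : ℚ)
      = ((1:ℚ)/(N+1)) * B j N := by
    intro i
    rw [B, Finset.mul_sum]
    refine Finset.sum_nbij' (fun f => Fin.removeNth i f) (fun g => i.insertNth (N+1) g)
      ?_ ?_ ?_ ?_ ?_
    · intro f hf
      obtain ⟨hfm, hfi⟩ := Finset.mem_filter.mp hf
      obtain ⟨hrange, hinj⟩ := mem_SB.mp hfm
      refine mem_SB.mpr ⟨fun k => ⟨(hrange _).1, ?_⟩, hinj.comp Fin.succAbove_right_injective⟩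
      have ha := (hrange (i.succAbove k)).2
      have hb : f (i.succAbove k) ≠ N + 1 := fun h =>
        Fin.succAbove_ne i k (hinj (h.trans hfi.symm))
      simp only [Fin.removeNth]
      omega
    · intro g hg
      obtain ⟨hrange, hinj⟩ := mem_SB.mp hg
      refine Finset.mem_filter.mpr ⟨mem_SB.mpr ⟨?_, ?_⟩, ?_⟩
      · intro a
        rcases eq_or_ne a i with rfl | ha
        · simp
        · obtain ⟨k, rfl⟩ := Fin.exists_succAbove_eq ha
          simp only [Fin.insertNth_apply_succAbove]
          exact ⟨(hrange k).1, (hrange k).2.trans (Nat.le_succ N)⟩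
      · exact insertNth_injective i g hinj (fun k h => by have := (hrange k).2; omega)
      · simp
    · intro f hf
      have hfi := (Finset.mem_filter.mp hf).2
      rw [← hfi]
      exact Fin.insertNth_self_removeNth i f
    · intro g hg
      simp
    · intro f hf
      have hfi := (Finset.mem_filter.mp hf).2
      rw [Fin.prod_univ_succAbove (fun k => (1:ℚ)/(f k : ℚ)) i, hfi]
      push_cast
      rfl
  have hBB : B (j + 1) (N + 1)
      = ∑ f ∈ SB (j+1) (N+1), ∏ i, (1:ℚ)/(f i : ℚ) := rfl
  rw [hBB, ← hsplit, h1, h2, Finset.sum_biUnion hdisj,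
    Finset.sum_congr rfl (fun i _ => hpiece i), Finset.sum_const, Finset.card_univ,
    Fintype.card_fin, nsmul_eq_mul]
  have hBN : (∑ f ∈ SB (j+1) N, ∏ i, (1:ℚ)/(f i : ℚ)) = B (j + 1) N := rfl
  rw [hBN]
  push_cast
  ring

private lemma AB (j : ℕ) : ∀ N, A j N = B j N := by
  induction j with
  | zero =>
    intro N
    unfold A B
    apply Finset.sum_congr _ (fun _ _ => rfl)
    ext f
    simp [mem_SA, mem_SB, Function.injective_of_subsingleton f]
  | succ j ih =>
    intro N
    induction N with
    | zero =>
      have hA : SA (j + 1) 0 = ∅ := by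
        ext f; simp only [Finset.notMem_empty, iff_false]
        intro hf
        have := (mem_SA.mp hf).1 0; omega
      have hB : SB (j + 1) 0 = ∅ := by
        ext f; simp only [Finset.notMem_empty, iff_false]
        intro hf
        have := (mem_SB.mp hf).1 0; omega
      simp [A, B, hA, hB]
    | succ N ihN =>
      rw [A_step, B_step, ihN, ih N]

/-- Lubell's problem: for positive integers `N` and `j`, the sum of `1/(w₁⋯w_j)`
  over ordered `j`-tuples of positive integers with `w₁+⋯+w_j ≤ N` equals the sum
  of `1/(w₁⋯w_j)` over ordered `j`-tuples of pairwise distinct positive integers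
  each bounded by `N`.  (Tuples are encoded as functions `Fin j → ℕ` with entries
  in `[1, N]`; in the first sum the bound `w_i ≤ N` is automatic from
  `w₁+⋯+w_j ≤ N` and positivity.) -/
theorem lubell_identity (N j : ℕ) (hN : 0 < N) (hj : 0 < j) :
    ∑ f ∈ (Fintype.piFinset fun _ : Fin j => Finset.Icc 1 N).filter
          (fun f => ∑ i, f i ≤ N),
        ∏ i, (1 : ℚ) / (f i : ℚ)
      = ∑ f ∈ (Fintype.piFinset fun _ : Fin j => Finset.Icc 1 N).filter
            (fun f => Function.Injective f),
          ∏ i, (1 : ℚ) / (f i : ℚ) := by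
  exact AB j N
end

section
/- Let j and k be positive integers. Let S_k = {(w₁,…,w_j) ∈ {1,2,…,k}^j : w₁+⋯+w_j = k} and T_k = {(w₁,…,w_j) ∈ {1,2,…,k}^j : w₁,…,w_j are pairwise distinct and max(w₁,…,w_j) = k}. Then ∑_{(w₁,…,w_j)∈S_k} 1/(w₁⋯w_j) = ∑_{(w₁,…,w_j)∈T_k} 1/(w₁⋯w_j), as an identity of rational numbers. -/
/-!
Write `A(j, k)` for the left-hand side, `B(j, k)` for the right-hand side and `C(j, K)` for the
same sum over all `j`-tuples of distinct elements of `{1, …, K}`, so that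
`C(j, K) = C(j, 0) + ∑_{1 ≤ m ≤ K} B(j, m)`. Marking a coordinate and using the symmetry of the
index sets gives the recursions `k A(j+1, k) = (j+1) ∑_{m<k} A(j, m)` (weight a composition of
`k` by `∑ wᵢ = k` and strip the marked part) and `k B(j+1, k) = (j+1) C(j, k-1)` (mark the unique
entry equal to `k`). Since `A(j, 0) = C(j, 0)`, induction on `j` gives `A(j, k) = B(j, k)` for
every `k ≥ 1`.
-/

open Finset

namespace Lubell

section Symmetry

variable {ι α β : Type*} [Fintype ι] [DecidableEq ι] [AddCommMonoid β]

theorem sum_filter_piFinset_comp_perm (t : Finset α) (P : (ι → α) → Prop) [DecidablePred P]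
    (hP : ∀ (σ : Equiv.Perm ι) f, P f → P (f ∘ σ)) (σ : Equiv.Perm ι) (F : (ι → α) → β) :
    ∑ f ∈ (Fintype.piFinset fun _ => t).filter P, F (f ∘ σ)
      = ∑ f ∈ (Fintype.piFinset fun _ => t).filter P, F f := by
  refine sum_nbij' (· ∘ σ) (· ∘ σ.symm) ?_ ?_ ?_ ?_ (fun _ _ => rfl)
  · intro f hf
    simp only [mem_filter, Fintype.mem_piFinset] at hf ⊢
    exact ⟨fun i => hf.1 (σ i), hP σ f hf.2⟩
  · intro f hf
    simp only [mem_filter, Fintype.mem_piFinset] at hf ⊢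
    exact ⟨fun i => hf.1 (σ.symm i), hP σ.symm f hf.2⟩
  · intro f _
    ext i
    simp
  · intro f _
    ext i
    simp

theorem sum_univ_sum_filter_piFinset_eq_card_nsmul (t : Finset α) (P : (ι → α) → Prop)
    [DecidablePred P] (hP : ∀ (σ : Equiv.Perm ι) f, P f → P (f ∘ σ)) (i₀ : ι)
    (G : ι → (ι → α) → β) (hG : ∀ i f, G i f = G i₀ (f ∘ Equiv.swap i i₀)) :
    ∑ i, ∑ f ∈ (Fintype.piFinset fun _ => t).filter P, G i f
      = Fintype.card ι • ∑ f ∈ (Fintype.piFinset fun _ => t).filter P, G i₀ f := by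
  calc ∑ i, ∑ f ∈ (Fintype.piFinset fun _ => t).filter P, G i f
      = ∑ i, ∑ f ∈ (Fintype.piFinset fun _ => t).filter P, G i₀ (f ∘ Equiv.swap i i₀) :=
        sum_congr rfl fun i _ => sum_congr rfl fun f _ => hG i f
    _ = ∑ _i : ι, ∑ f ∈ (Fintype.piFinset fun _ => t).filter P, G i₀ f :=
        sum_congr rfl fun i _ => sum_filter_piFinset_comp_perm t P hP _ (G i₀)
    _ = _ := by rw [sum_const, card_univ]

end Symmetry

def invProd {ι : Type*} [Fintype ι] (f : ι → ℕ) : ℚ := ∏ i, (1 : ℚ) / (f i : ℚ)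

theorem invProd_comp_perm {ι : Type*} [Fintype ι] (f : ι → ℕ) (σ : Equiv.Perm ι) :
    invProd (f ∘ σ) = invProd f :=
  Equiv.prod_comp σ fun i => (1 : ℚ) / (f i : ℚ)

theorem invProd_eq_invProd_init_mul {n : ℕ} (f : Fin (n + 1) → ℕ) :
    invProd f = invProd (Fin.init f) * (1 / (f (Fin.last n) : ℚ)) :=
  Fin.prod_univ_castSucc _

theorem filter_piFinset_Icc_sum_eq_of_le {ι : Type*} [Fintype ι] [DecidableEq ι] {K m : ℕ}
    (hm : m ≤ K) :
    (Fintype.piFinset fun _ : ι => Icc 1 K).filter (fun f => ∑ i, f i = m)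
      = (Fintype.piFinset fun _ => Icc 1 m).filter (fun f => ∑ i, f i = m) := by
  ext f
  simp only [mem_filter, Fintype.mem_piFinset, mem_Icc]
  refine ⟨fun ⟨hf, hsum⟩ => ⟨fun i => ⟨(hf i).1, ?_⟩, hsum⟩,
    fun ⟨hf, hsum⟩ => ⟨fun i => ⟨(hf i).1, (hf i).2.trans hm⟩, hsum⟩⟩
  exact hsum ▸ single_le_sum (fun _ _ => Nat.zero_le _) (mem_univ i)

def compositionSum (j k : ℕ) : ℚ :=
  ∑ f ∈ (Fintype.piFinset fun _ : Fin j => Icc 1 k).filter (fun f => ∑ i, f i = k), invProd f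

def distinctSum (j K : ℕ) : ℚ :=
  ∑ f ∈ (Fintype.piFinset fun _ : Fin j => Icc 1 K).filter Function.Injective, invProd f

def distinctMaxSum (j k : ℕ) : ℚ :=
  ∑ f ∈ (Fintype.piFinset fun _ : Fin j => Icc 1 k).filter
      (fun f => Function.Injective f ∧ ∃ i, f i = k), invProd f

theorem compositionSum_zero_eq_distinctSum_zero (j : ℕ) :
    compositionSum j 0 = distinctSum j 0 := by
  refine sum_congr (filter_congr fun f hf => ?_) fun _ _ => rfl
  have : IsEmpty (Fin j) := ⟨fun i => by simpa using Fintype.mem_piFinset.mp hf i⟩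
  simp [Function.injective_of_subsingleton]

theorem compositionSum_zero_left (k : ℕ) : compositionSum 0 (k + 1) = 0 := by
  simp [compositionSum]

theorem distinctMaxSum_zero_left (k : ℕ) : distinctMaxSum 0 k = 0 := by
  simp [distinctMaxSum]

theorem distinctSum_succ (j K : ℕ) :
    distinctSum j (K + 1) = distinctSum j K + distinctMaxSum j (K + 1) := by
  rw [distinctSum, ← sum_filter_not_add_sum_filter _ (fun f => ∃ i, f i = K + 1),
    filter_filter, filter_filter]
  congr 2
  ext f
  simp only [mem_filter, Fintype.mem_piFinset, mem_Icc, not_exists]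
  constructor
  · rintro ⟨hf, hinj, hne⟩
    exact ⟨fun i => ⟨(hf i).1, Nat.le_of_lt_succ ((hf i).2.lt_of_ne (hne i))⟩, hinj⟩
  · rintro ⟨hf, hinj⟩
    refine ⟨fun i => ⟨(hf i).1, (hf i).2.trans K.le_succ⟩, hinj, fun i => ?_⟩
    have := (hf i).2
    omega

theorem distinctSum_eq_distinctSum_zero_add (j K : ℕ) :
    distinctSum j K = distinctSum j 0 + ∑ m ∈ range K, distinctMaxSum j (m + 1) := by
  induction K with
  | zero => simp
  | succ K ih => rw [distinctSum_succ, ih, sum_range_succ, add_assoc]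

theorem sum_invProd_filter_sum_le (j k : ℕ) :
    ∑ g ∈ (Fintype.piFinset fun _ : Fin j => Icc 1 (k + 1)).filter (fun g => ∑ i, g i ≤ k),
        invProd g
      = ∑ m ∈ range (k + 1), compositionSum j m := by
  rw [← sum_fiberwise_of_maps_to (g := fun g : Fin j → ℕ => ∑ i, g i) (t := range (k + 1))
    fun g hg => mem_range.mpr (Nat.lt_succ_of_le (mem_filter.mp hg).2)]
  refine sum_congr rfl fun m hm => sum_congr ?_ fun _ _ => rfl
  have hmk : m ≤ k := Nat.le_of_lt_succ (mem_range.mp hm)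
  rw [filter_filter, ← filter_piFinset_Icc_sum_eq_of_le (Nat.le_succ_of_le hmk)]
  exact filter_congr fun g _ => ⟨fun ⟨_, hsum⟩ => hsum, fun hsum => ⟨hsum ▸ hmk, hsum⟩⟩

/-- Dropping the last part of a composition of `k + 1` into `j + 1` parts leaves an arbitrary
`j`-tuple of positive integers with sum at most `k`. -/
theorem sum_compositions_invProd_init (j k : ℕ) :
    ∑ f ∈ (Fintype.piFinset fun _ : Fin (j + 1) => Icc 1 (k + 1)).filter
        (fun f => ∑ i, f i = k + 1), invProd (Fin.init f)
      = ∑ m ∈ range (k + 1), compositionSum j m := by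
  rw [← sum_invProd_filter_sum_le]
  refine sum_nbij' Fin.init (fun g => Fin.snoc g (k + 1 - ∑ i, g i)) ?_ ?_ ?_ ?_
    (fun _ _ => rfl)
  · intro f hf
    simp only [mem_filter, Fintype.mem_piFinset, mem_Icc, Fin.sum_univ_castSucc] at hf ⊢
    have := hf.1 (Fin.last j)
    exact ⟨fun i => hf.1 i.castSucc, by simp only [Fin.init]; omega⟩
  · intro g hg
    obtain ⟨hg, hle⟩ := mem_filter.mp hg
    refine mem_filter.mpr ⟨Fintype.mem_piFinset.mpr fun i => ?_, ?_⟩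
    · induction i using Fin.lastCases with
      | last => rw [Fin.snoc_last, mem_Icc]; omega
      | cast i => rw [Fin.snoc_castSucc]; exact Fintype.mem_piFinset.mp hg i
    · rw [Fin.sum_univ_castSucc]
      simp only [Fin.snoc_castSucc, Fin.snoc_last]
      omega
  · intro f hf
    simp only [mem_filter, Fin.sum_univ_castSucc] at hf
    conv_rhs => rw [← Fin.snoc_init_self f]
    congr 1
    simp only [Fin.init]
    omega
  · intro g _
    simp

theorem mul_compositionSum_succ (j k : ℕ) :
    (k + 1 : ℚ) * compositionSum (j + 1) (k + 1)
      = (j + 1) * ∑ m ∈ range (k + 1), compositionSum j m := by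
  set S := (Fintype.piFinset fun _ : Fin (j + 1) => Icc 1 (k + 1)).filter
    (fun f => ∑ i, f i = k + 1)
  have hS : ∀ (σ : Equiv.Perm (Fin (j + 1))) (f : Fin (j + 1) → ℕ),
      ∑ i, f i = k + 1 → ∑ i, (f ∘ σ) i = k + 1 :=
    fun σ f hf => (Equiv.sum_comp σ f).trans hf
  calc (k + 1 : ℚ) * compositionSum (j + 1) (k + 1)
      = ∑ f ∈ S, ∑ i, (f i : ℚ) * invProd f := by
        rw [compositionSum, mul_sum]
        refine sum_congr rfl fun f hf => ?_
        rw [← sum_mul, ← Nat.cast_sum, (mem_filter.mp hf).2, Nat.cast_succ]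
    _ = ∑ i, ∑ f ∈ S, (f i : ℚ) * invProd f := sum_comm
    _ = (j + 1) * ∑ f ∈ S, (f (Fin.last j) : ℚ) * invProd f := by
        rw [sum_univ_sum_filter_piFinset_eq_card_nsmul _ _ hS (Fin.last j), Fintype.card_fin,
          nsmul_eq_mul, Nat.cast_succ]
        intro i f
        simp [invProd_comp_perm]
    _ = (j + 1) * ∑ f ∈ S, invProd (Fin.init f) := by
        refine congrArg _ (sum_congr rfl fun f hf => ?_)
        have hlast := mem_Icc.mp (Fintype.mem_piFinset.mp (mem_filter.mp hf).1 (Fin.last j))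
        have hpos : (f (Fin.last j) : ℚ) ≠ 0 := Nat.cast_ne_zero.mpr (by omega)
        rw [invProd_eq_invProd_init_mul]
        field_simp
    _ = (j + 1) * ∑ m ∈ range (k + 1), compositionSum j m := by
        rw [sum_compositions_invProd_init]

/-- A distinct tuple whose last entry is `k + 1` is a distinct tuple in `{1, …, k}` followed
by `k + 1`. -/
theorem sum_ite_last_eq_distinctSum_div (j k : ℕ) :
    ∑ f ∈ (Fintype.piFinset fun _ : Fin (j + 1) => Icc 1 (k + 1)).filter
        (fun f => Function.Injective f ∧ ∃ i, f i = k + 1),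
        (if f (Fin.last j) = k + 1 then invProd f else 0)
      = distinctSum j k / (k + 1) := by
  rw [← sum_filter, filter_filter, distinctSum, sum_div]
  refine sum_nbij' Fin.init (fun g => Fin.snoc g (k + 1)) ?_ ?_ ?_ ?_ ?_
  · intro f hf
    obtain ⟨hf, ⟨hinj, -⟩, hlast⟩ := mem_filter.mp hf
    refine mem_filter.mpr ⟨Fintype.mem_piFinset.mpr fun i => ?_,
      hinj.comp (Fin.castSucc_injective _)⟩
    have hi := mem_Icc.mp (Fintype.mem_piFinset.mp hf i.castSucc)
    have hne : f i.castSucc ≠ k + 1 := fun h =>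
      (Fin.castSucc_lt_last i).ne (hinj (h.trans hlast.symm))
    exact mem_Icc.mpr ⟨hi.1, by simp only [Fin.init]; omega⟩
  · intro g hg
    obtain ⟨hg, hinj⟩ := mem_filter.mp hg
    have hg' := Fintype.mem_piFinset.mp hg
    refine mem_filter.mpr ⟨Fintype.mem_piFinset.mpr fun i => ?_,
      ⟨Fin.snoc_injective_of_injective hinj ?_, Fin.last j, Fin.snoc_last _ _⟩, Fin.snoc_last _ _⟩
    · induction i using Fin.lastCases with
      | last => simp
      | cast i =>
        rw [Fin.snoc_castSucc]
        exact Icc_subset_Icc_right k.le_succ (hg' i)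
    · rintro ⟨i, hi⟩
      have := (mem_Icc.mp (hg' i)).2
      omega
  · intro f hf
    rw [← (mem_filter.mp hf).2.2]
    exact Fin.snoc_init_self f
  · intro g _
    exact Fin.init_snoc _ _
  · intro f hf
    rw [invProd_eq_invProd_init_mul, (mem_filter.mp hf).2.2, Nat.cast_succ, mul_one_div]

theorem mul_distinctMaxSum_succ (j k : ℕ) :
    (k + 1 : ℚ) * distinctMaxSum (j + 1) (k + 1) = (j + 1) * distinctSum j k := by
  set T := (Fintype.piFinset fun _ : Fin (j + 1) => Icc 1 (k + 1)).filter
    (fun f => Function.Injective f ∧ ∃ i, f i = k + 1)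
  have hT : ∀ (σ : Equiv.Perm (Fin (j + 1))) (f : Fin (j + 1) → ℕ),
      (Function.Injective f ∧ ∃ i, f i = k + 1) →
        Function.Injective (f ∘ σ) ∧ ∃ i, (f ∘ σ) i = k + 1 :=
    fun σ f ⟨hinj, i, hi⟩ => ⟨hinj.comp σ.injective, σ.symm i, by simpa using hi⟩
  have hmark : distinctMaxSum (j + 1) (k + 1)
      = ∑ i, ∑ f ∈ T, if f i = k + 1 then invProd f else 0 := by
    rw [sum_comm]
    refine sum_congr rfl fun f hf => ?_
    obtain ⟨-, hinj, i₀, hi₀⟩ := mem_filter.mp hf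
    simp only [← hi₀, hinj.eq_iff, sum_ite_eq', mem_univ, if_true]
  rw [hmark, sum_univ_sum_filter_piFinset_eq_card_nsmul _ _ hT (Fin.last j),
    sum_ite_last_eq_distinctSum_div, Fintype.card_fin, nsmul_eq_mul, Nat.cast_succ]
  · field_simp
  · intro i f
    simp [invProd_comp_perm]

theorem compositionSum_succ_eq_distinctMaxSum (j k : ℕ) :
    compositionSum j (k + 1) = distinctMaxSum j (k + 1) := by
  induction j generalizing k with
  | zero => rw [compositionSum_zero_left, distinctMaxSum_zero_left]
  | succ j ih =>
    refine mul_left_cancel₀ (k.cast_add_one_ne_zero : (k + 1 : ℚ) ≠ 0) ?_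
    rw [mul_compositionSum_succ, mul_distinctMaxSum_succ, sum_range_succ',
      distinctSum_eq_distinctSum_zero_add, compositionSum_zero_eq_distinctSum_zero,
      add_comm (distinctSum j 0)]
    simp only [ih]

end Lubell

theorem lubell_identity_refined_general (j k : ℕ) (hk : 0 < k) :
    ∑ f ∈ (Fintype.piFinset fun _ : Fin j => Finset.Icc 1 k).filter
          (fun f => ∑ i, f i = k),
        ∏ i, (1 : ℚ) / (f i : ℚ)
      = ∑ f ∈ (Fintype.piFinset fun _ : Fin j => Finset.Icc 1 k).filter
            (fun f => Function.Injective f ∧ ∃ i, f i = k),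
          ∏ i, (1 : ℚ) / (f i : ℚ) := by
  obtain ⟨k, rfl⟩ := Nat.exists_eq_add_one_of_ne_zero hk.ne'
  exact Lubell.compositionSum_succ_eq_distinctMaxSum j k

/-- Refinement of Lubell's identity: for positive integers `j` and `k`, the sum of
  `1/(w₁⋯w_j)` over ordered `j`-tuples from `{1,…,k}` with `w₁+⋯+w_j = k` equals
  the sum of `1/(w₁⋯w_j)` over ordered `j`-tuples from `{1,…,k}` with pairwise
  distinct entries whose maximum is exactly `k` (i.e. some entry equals `k`). -/
theorem lubell_identity_refined (j k : ℕ) (hj : 0 < j) (hk : 0 < k) :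
    ∑ f ∈ (Fintype.piFinset fun _ : Fin j => Finset.Icc 1 k).filter
          (fun f => ∑ i, f i = k),
        ∏ i, (1 : ℚ) / (f i : ℚ)
      = ∑ f ∈ (Fintype.piFinset fun _ : Fin j => Finset.Icc 1 k).filter
            (fun f => Function.Injective f ∧ ∃ i, f i = k),
          ∏ i, (1 : ℚ) / (f i : ℚ) :=
  lubell_identity_refined_general j k hk
end

section
/- For every natural number N, the set ℤ × {0,1,…,N} is a unique expansion set. Precisely: let a : ℤ → ℕ → ℂ satisfy a(n)(k) = 0 whenever k > N, and suppose there is a nonempty open subset U of ℂ with 0 ∉ U such that for every z ∈ U the family (a(n)(k) · zⁿ · (log z)ᵏ)_{n∈ℤ, 0≤k≤N} is absolutely summable with sum equal to 0, where log denotes the principal branch of the complex logarithm. Then a(n)(k) = 0 for all n ∈ ℤ and all k. -/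
/-!
Put `f k z = ∑ₙ a n k zⁿ`. Absolute convergence at two points `t₁ z₁`, `t₂ z₁` of `U`
(`t₁ < 1 < t₂`, `z₁` off the real axis) makes each `f k` holomorphic on an annulus around
`|z| = |z₁|`, and the hypothesis reads `∑ₖ f k z (log z)ᵏ = 0` near `z₁`. So the holomorphic
function `g w = ∑ₖ f k (eʷ) wᵏ` vanishes near `log z₁`, hence on the whole vertical strip
`exp⁻¹(annulus)`. As `exp` is `2πi`-periodic, for `z` in the annulus the polynomial
`∑ₖ f k z Xᵏ` vanishes at every `log z + 2πi m`, so `f k = 0` on the annulus, and the Laurent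
coefficients `a n k` of `f k`, being circle integrals of `f k`, vanish.
-/

open Complex Finset Filter Topology Metric MeasureTheory
open scoped Real

theorem Summable.tsum_prod_eq_sum_range {α E : Type*} [NormedAddCommGroup E] [CompleteSpace E]
    {f : α × ℕ → E} (hf : Summable f) {N : ℕ} (hN : ∀ a k, N < k → f (a, k) = 0) :
    ∑' p, f p = ∑ k ∈ range (N + 1), ∑' a, f (a, k) := by
  have hrow (k : ℕ) : Summable fun a => f (a, k) :=
    hf.comp_injective (Prod.mk_left_injective k)
  rw [hf.tsum_prod, ← Summable.tsum_finsetSum fun k _ => hrow k]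
  refine tsum_congr fun a => tsum_eq_sum fun k hk => hN a k ?_
  simpa using hk

theorem summable_norm_mul_zpow_of_summable_norm {a : ℤ → ℕ → ℂ} {z w : ℂ} (hw : w ≠ 0)
    (h : Summable fun p : ℤ × ℕ => ‖a p.1 p.2 * z ^ p.1 * w ^ p.2‖) (k : ℕ) :
    Summable fun n : ℤ => ‖a n k‖ * ‖z‖ ^ n := by
  have hrow := (h.comp_injective (Prod.mk_left_injective k)).div_const (‖w‖ ^ k)
  refine hrow.congr fun n => ?_
  simp [norm_zpow, norm_pow, hw]

theorem hasSum_circleIntegral_of_norm_le {ι E : Type*} [Countable ι] [NormedAddCommGroup E]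
    [NormedSpace ℂ E] [CompleteSpace E] {F : ι → ℂ → E} {c : ℂ} {R : ℝ} {u : ι → ℝ}
    (hR : 0 ≤ R) (hF : ∀ i, ContinuousOn (F i) (sphere c R)) (hu : Summable u)
    (hFu : ∀ i, ∀ z ∈ sphere c R, ‖F i z‖ ≤ u i) :
    HasSum (fun i => ∮ z in C(c, R), F i z) (∮ z in C(c, R), ∑' i, F i z) := by
  refine intervalIntegral.hasSum_integral_of_dominated_convergence (fun i _ => R * u i)
    (fun i => ((hF i).circleIntegrable hR).out.aestronglyMeasurable_restrict_uIoc)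
    (fun i => ae_of_all _ fun θ _ => ?_) (ae_of_all _ fun _ _ => hu.mul_left _)
    intervalIntegrable_const (ae_of_all _ fun θ _ => ?_)
  · rw [norm_smul, deriv_circleMap, norm_mul, norm_circleMap_zero, Complex.norm_I, mul_one,
      abs_of_nonneg hR]
    exact mul_le_mul_of_nonneg_left (hFu i _ (circleMap_mem_sphere c hR θ)) hR
  · exact (hu.of_norm_bounded fun i => hFu i _ (circleMap_mem_sphere c hR θ)).hasSum.const_smul _

theorem circleIntegral_zpow (c : ℂ) {R : ℝ} (hR : R ≠ 0) (n : ℤ) :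
    (∮ z in C(c, R), (z - c) ^ n) = if n = -1 then 2 * π * I else 0 := by
  split_ifs with hn
  · simpa [hn] using circleIntegral.integral_sub_center_inv c hR
  · exact circleIntegral.integral_sub_zpow_of_ne hn c c R

theorem eq_zero_of_tsum_mul_zpow_eq_zero {c : ℤ → ℂ} {R : ℝ} (hR : 0 < R)
    (hc : Summable fun n => ‖c n‖ * R ^ n) (h : ∀ z ∈ sphere (0 : ℂ) R, ∑' n, c n * z ^ n = 0)
    (m : ℤ) : c m = 0 := by
  have hz0 {z : ℂ} (hz : z ∈ sphere (0 : ℂ) R) : z ≠ 0 := ne_zero_of_mem_sphere hR.ne' ⟨z, hz⟩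
  have hzpow {z : ℂ} (hz : z ∈ sphere (0 : ℂ) R) (n : ℤ) :
      z ^ (n - m - 1) = z ^ n * z ^ (-m - 1) := by
    rw [← zpow_add₀ (hz0 hz)]
    ring_nf
  have hterm (n : ℤ) :
      (∮ z in C(0, R), c n * z ^ (n - m - 1)) = if n = m then c m * (2 * π * I) else 0 := by
    have := circleIntegral_zpow 0 hR.ne' (n - m - 1)
    simp only [sub_zero, sub_eq_neg_self, sub_eq_zero] at this
    rw [circleIntegral.integral_const_mul, this]
    split_ifs with hn
    · rw [hn]
    · rw [mul_zero]
  have hsum : (∮ z in C(0, R), ∑' n, c n * z ^ (n - m - 1)) = 0 := by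
    rw [circleIntegral.integral_congr hR.le (g := fun _ => 0) fun z hz => ?_]
    · simp [circleIntegral]
    simp only [hzpow hz, ← mul_assoc, tsum_mul_right, h z hz, zero_mul]
  have hcoeff := hasSum_circleIntegral_of_norm_le hR.le
    (F := fun n z => c n * z ^ (n - m - 1)) (u := fun n => ‖c n‖ * R ^ n * R ^ (-m - 1))
    (fun n => by fun_prop (disch := exact fun z hz => Or.inl (hz0 hz))) (hc.mul_right _)
    (fun n z hz => by simp [hzpow hz, norm_zpow, mem_sphere_zero_iff_norm.1 hz, mul_assoc])
  simp only [hterm, hsum] at hcoeff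
  simpa [Real.pi_ne_zero, I_ne_zero] using (hasSum_ite_eq m (c m * (2 * π * I))).unique hcoeff

def annulus (r₁ r₂ : ℝ) : Set ℂ := {z | r₁ < ‖z‖ ∧ ‖z‖ < r₂}

theorem isOpen_annulus (r₁ r₂ : ℝ) : IsOpen (annulus r₁ r₂) :=
  (isOpen_lt continuous_const continuous_norm).inter (isOpen_lt continuous_norm continuous_const)

theorem zpow_le_zpow_add_zpow {x r₁ r₂ : ℝ} (h₁ : 0 < r₁) (hx₁ : r₁ ≤ x) (hx₂ : x ≤ r₂) (n : ℤ) :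
    x ^ n ≤ r₁ ^ n + r₂ ^ n := by
  have hx : 0 < x := h₁.trans_le hx₁
  rcases le_total 0 n with hn | hn
  · have := zpow_le_zpow_left₀ hn hx.le hx₂
    linarith [zpow_pos h₁ n]
  · have := zpow_le_zpow_left₀ (neg_nonneg.2 hn) (inv_pos.2 hx).le (inv_anti₀ h₁ hx₁)
    rw [inv_zpow', inv_zpow', neg_neg] at this
    linarith [zpow_pos (hx.trans_le hx₂) n]

theorem differentiableOn_tsum_mul_zpow {c : ℤ → ℂ} {r₁ r₂ : ℝ} (h₁ : 0 < r₁)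
    (hc₁ : Summable fun n => ‖c n‖ * r₁ ^ n) (hc₂ : Summable fun n => ‖c n‖ * r₂ ^ n) :
    DifferentiableOn ℂ (fun z => ∑' n, c n * z ^ n) (annulus r₁ r₂) := by
  refine differentiableOn_tsum_of_summable_norm (hc₁.add hc₂) (fun n z hz => ?_)
    (isOpen_annulus r₁ r₂) (fun n z hz => ?_)
  · have hz0 : z ≠ 0 := norm_pos_iff.1 (h₁.trans hz.1)
    exact ((differentiableAt_zpow.2 (Or.inl hz0)).const_mul (c n)).differentiableWithinAt
  · rw [norm_mul, norm_zpow, ← mul_add]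
    exact mul_le_mul_of_nonneg_left (zpow_le_zpow_add_zpow h₁ hz.1.le hz.2.le n) (norm_nonneg _)

theorem eq_zero_of_sum_mul_pow_eq_zero {N : ℕ} {c : ℕ → ℂ} {S : Set ℂ} (hS : S.Infinite)
    (h : ∀ x ∈ S, ∑ k ∈ range (N + 1), c k * x ^ k = 0) {k : ℕ} (hk : k ≤ N) : c k = 0 := by
  set P : Polynomial ℂ := ∑ k ∈ range (N + 1), Polynomial.C (c k) * Polynomial.X ^ k
  have hP : P = 0 := Polynomial.eq_zero_of_infinite_isRoot P <| hS.mono fun x hx => by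
    simpa [P, Polynomial.eval_finsetSum] using h x hx
  simpa [P, Polynomial.finsetSum_coeff, Nat.lt_succ_iff.2 hk] using congr_arg (·.coeff k) hP

theorem sum_mul_log_add_pow_eq_zero {N : ℕ} {f : ℕ → ℂ → ℂ} {r₁ r₂ : ℝ} (h₁ : 0 < r₁)
    (hf : ∀ k, DifferentiableOn ℂ (f k) (annulus r₁ r₂)) {z₀ : ℂ}
    (hz₀ : z₀ ∈ annulus r₁ r₂) (hz₀' : z₀ ∈ slitPlane)
    (h : ∀ᶠ z in 𝓝 z₀, ∑ k ∈ range (N + 1), f k z * log z ^ k = 0)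
    {z : ℂ} (hz : z ∈ annulus r₁ r₂) (m : ℤ) :
    ∑ k ∈ range (N + 1), f k z * (log z + m * (2 * π * I)) ^ k = 0 := by
  have h₂ : 0 < r₂ := h₁.trans (hz₀.1.trans hz₀.2)
  set S : Set ℂ := re ⁻¹' Set.Ioo (Real.log r₁) (Real.log r₂)
  have hexp_mem {w : ℂ} (hw : w ∈ S) : exp w ∈ annulus r₁ r₂ := by
    rw [annulus, Set.mem_ofPred_eq, norm_exp, ← Real.log_lt_iff_lt_exp h₁,
      ← Real.lt_log_iff_exp_lt h₂]
    exact hw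
  have hlog_mem {z : ℂ} (hz : z ∈ annulus r₁ r₂) : log z ∈ S := by
    rw [Set.mem_preimage, log_re]
    exact ⟨Real.log_lt_log h₁ hz.1, Real.log_lt_log (h₁.trans hz.1) hz.2⟩
  set g : ℂ → ℂ := fun w => ∑ k ∈ range (N + 1), f k (exp w) * w ^ k
  have hg : DifferentiableOn ℂ g S := DifferentiableOn.fun_sum fun k _ =>
    ((hf k).comp differentiable_exp.differentiableOn fun w hw => hexp_mem hw).mul
      (differentiable_pow k).differentiableOn
  have hg_near : g =ᶠ[𝓝 (log z₀)] 0 := by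
    have hexp : Tendsto exp (𝓝 (log z₀)) (𝓝 z₀) := by
      simpa [exp_log (slitPlane_ne_zero hz₀')] using continuous_exp.tendsto (log z₀)
    filter_upwards [hexp.eventually h, expOpenPartialHomeomorph.eventually_left_inverse' hz₀']
      with w hw hlog
    change ∑ k ∈ range (N + 1), f k (exp w) * log (exp w) ^ k = 0 at hw
    change log (exp w) = w at hlog
    rwa [hlog] at hw
  have hS : IsPreconnected S := ((convex_Ioo _ _).linear_preimage reLm).isPreconnected
  have hg_zero : Set.EqOn g 0 S :=
    (hg.analyticOnNhd (isOpen_Ioo.preimage continuous_re))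
      |>.eqOn_zero_of_preconnected_of_eventuallyEq_zero hS (hlog_mem hz₀) hg_near
  have hmem : log z + m * (2 * π * I) ∈ S := by
    have hre : (log z + m * (2 * π * I)).re = (log z).re := by simp
    rw [Set.mem_preimage, hre]
    exact hlog_mem hz
  have hexp : exp (log z + m * (2 * π * I)) = z := by
    rw [exp_add, exp_log (norm_pos_iff.1 (h₁.trans hz.1)), exp_int_mul_two_pi_mul_I, mul_one]
  simpa [g, hexp] using hg_zero hmem

theorem eq_zero_of_sum_mul_log_pow_eventually_eq_zero {N : ℕ} {f : ℕ → ℂ → ℂ} {r₁ r₂ : ℝ}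
    (h₁ : 0 < r₁) (hf : ∀ k, DifferentiableOn ℂ (f k) (annulus r₁ r₂)) {z₀ : ℂ}
    (hz₀ : z₀ ∈ annulus r₁ r₂) (hz₀' : z₀ ∈ slitPlane)
    (h : ∀ᶠ z in 𝓝 z₀, ∑ k ∈ range (N + 1), f k z * log z ^ k = 0)
    {z : ℂ} (hz : z ∈ annulus r₁ r₂) {k : ℕ} (hk : k ≤ N) : f k z = 0 := by
  have hinj : Function.Injective fun m : ℤ => log z + m * (2 * π * I) := fun m n hmn => by
    simpa [Real.pi_ne_zero, I_ne_zero] using hmn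
  refine eq_zero_of_sum_mul_pow_eq_zero (c := (f · z)) (Set.infinite_range_of_injective hinj) ?_ hk
  rintro _ ⟨m, rfl⟩
  exact sum_mul_log_add_pow_eq_zero h₁ hf hz₀ hz₀' h hz m

theorem exists_ofReal_mul_mem_of_mem_nhds {U : Set ℂ} {z : ℂ} (hU : U ∈ 𝓝 z) :
    ∃ t₁ t₂ : ℝ, 0 < t₁ ∧ t₁ < 1 ∧ 1 < t₂ ∧ (t₁ : ℂ) * z ∈ U ∧ (t₂ : ℂ) * z ∈ U := by
  have hcont : Tendsto (fun t : ℝ => (t : ℂ) * z) (𝓝 1) (𝓝 z) := by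
    simpa using (Continuous.tendsto (f := fun t : ℝ => (t : ℂ) * z) (by fun_prop) 1)
  obtain ⟨l, u, ⟨hl, hu⟩, hlu⟩ :=
    mem_nhds_iff_exists_Ioo_subset.1 (inter_mem (hcont hU) (Ioi_mem_nhds one_pos))
  obtain ⟨t₁, hlt₁, ht₁⟩ := exists_between hl
  obtain ⟨t₂, ht₂, ht₂u⟩ := exists_between hu
  have h₁ := hlu ⟨hlt₁, ht₁.trans hu⟩
  exact ⟨t₁, t₂, h₁.2, ht₁, ht₂, h₁.1, (hlu ⟨hl.trans ht₂, ht₂u⟩).1⟩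

theorem log_ne_zero_of_im_ne_zero {z : ℂ} (hz : z.im ≠ 0) : log z ≠ 0 := by
  have hz0 : z ≠ 0 := by
    rintro rfl
    simp at hz
  intro hlog
  apply hz
  rw [← exp_log hz0, hlog, exp_zero, one_im]

theorem int_unique_expansion_set_general
    (N : ℕ) (a : ℤ → ℕ → ℂ) (ha : ∀ (n : ℤ) (k : ℕ), N < k → a n k = 0)
    (U : Set ℂ) (hU : IsOpen U) (hne : U.Nonempty)
    (hsum : ∀ z ∈ U,
      Summable (fun p : ℤ × ℕ => ‖a p.1 p.2 * z ^ p.1 * Complex.log z ^ p.2‖) ∧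
        ∑' p : ℤ × ℕ, a p.1 p.2 * z ^ p.1 * Complex.log z ^ p.2 = 0) :
    ∀ (n : ℤ) (k : ℕ), a n k = 0 := by
  intro n k
  rcases lt_or_ge N k with hk | hk
  · exact ha n k hk
  obtain ⟨z₁, hz₁U, hz₁ : z₁.im ≠ 0⟩ : (U ∩ {z : ℂ | z.im ≠ 0}).Nonempty :=
    ((dense_compl_singleton (0 : ℝ)).preimage isOpenMap_im).inter_open_nonempty U hU hne
  obtain ⟨t₁, t₂, ht₁, ht₁1, ht₂1, ht₁U, ht₂U⟩ :=
    exists_ofReal_mul_mem_of_mem_nhds (hU.mem_nhds hz₁U)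
  have hrow {t : ℝ} (ht : 0 < t) (htU : (t : ℂ) * z₁ ∈ U) (k : ℕ) :
      Summable fun n : ℤ => ‖a n k‖ * (t * ‖z₁‖) ^ n := by
    have him : ((t : ℂ) * z₁).im ≠ 0 := by simp [ht.ne', hz₁]
    simpa [abs_of_pos ht] using summable_norm_mul_zpow_of_summable_norm
      (log_ne_zero_of_im_ne_zero him) (hsum _ htU).1 k
  set f : ℕ → ℂ → ℂ := fun k z => ∑' n, a n k * z ^ n
  have hf_log : ∀ z ∈ U, ∑ k ∈ range (N + 1), f k z * log z ^ k = 0 := fun z hz => by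
    rw [← (hsum z hz).2, (hsum z hz).1.of_norm.tsum_prod_eq_sum_range (N := N) fun n k hk => by
      simp [ha n k hk]]
    simp only [f, tsum_mul_right]
  have hr : 0 < ‖z₁‖ := norm_pos_iff.2 fun h => hz₁ (by simp [h])
  have hA {z : ℂ} (hz : ‖z‖ = ‖z₁‖) : z ∈ annulus (t₁ * ‖z₁‖) (t₂ * ‖z₁‖) := by
    rw [annulus, Set.mem_ofPred_eq, hz]
    constructor <;> nlinarith
  refine eq_zero_of_tsum_mul_zpow_eq_zero hr (by simpa using hrow one_pos (by simpa) k)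
    (fun z hz => ?_) n
  exact eq_zero_of_sum_mul_log_pow_eventually_eq_zero (by positivity)
    (fun k => differentiableOn_tsum_mul_zpow (by positivity) (hrow ht₁ ht₁U k)
      (hrow (by linarith) ht₂U k))
    (hA rfl) (Or.inr hz₁) (eventually_of_mem (hU.mem_nhds hz₁U) hf_log)
    (hA (mem_sphere_zero_iff_norm.1 hz)) hk

/-- `ℤ × {0,1,…,N}` is a unique expansion set: if a series
  `∑_{n∈ℤ, 0≤k≤N} a(n)(k) zⁿ (log z)ᵏ` converges absolutely to `0` for all `z`
  in some nonempty open set `U ⊆ ℂ` with `0 ∉ U`, then all coefficients vanish.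
  (log is the principal branch of the complex logarithm.) -/
theorem int_unique_expansion_set
    (N : ℕ) (a : ℤ → ℕ → ℂ) (ha : ∀ (n : ℤ) (k : ℕ), N < k → a n k = 0)
    (U : Set ℂ) (hU : IsOpen U) (hne : U.Nonempty) (h0 : (0 : ℂ) ∉ U)
    (hsum : ∀ z ∈ U,
      Summable (fun p : ℤ × ℕ => ‖a p.1 p.2 * z ^ p.1 * Complex.log z ^ p.2‖) ∧
        ∑' p : ℤ × ℕ, a p.1 p.2 * z ^ p.1 * Complex.log z ^ p.2 = 0) :
    ∀ (n : ℤ) (k : ℕ), a n k = 0 :=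
  int_unique_expansion_set_general N a ha U hU hne hsum
end

section
/- Let n ∈ ℂ and m ∈ ℕ, and define f : ℂ → ℂ on the slit plane ℂ \ (−∞,0] by f(z) = zⁿ · (log z)ᵐ, where zⁿ = exp(n · log z) and log is the principal branch of the complex logarithm. Let E be the operator on functions ℂ → ℂ given by (E g)(z) = z · g′(z) (the Euler operator z·d/dz), and let Eᵏ denote its k-fold iterate. Then for every real x > 0 and every y ∈ ℂ, the series ∑_{k≥0} (yᵏ/k!) · (Eᵏ f)(x) converges absolutely, and its sum equals xⁿ · exp(n·y) · (log x + y)ᵐ, i.e., equals f evaluated formally at x·e^y. -/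
open Complex

set_option maxHeartbeats 1000000

private lemma g_diff (n : ℂ) (m : ℕ) :
    Differentiable ℂ (fun t : ℂ => Complex.exp (n * t) * t ^ m) :=
  ((differentiable_exp.comp (differentiable_const n |>.mul differentiable_id)).mul
    (differentiable_pow m))

private lemma iter_eq (n : ℂ) (m : ℕ) (k : ℕ) :
    ∀ z ∈ Complex.slitPlane,
      ((fun g : ℂ → ℂ => fun z => z * deriv g z)^[k]
          (fun z : ℂ => z ^ n * Complex.log z ^ m)) z
        = iteratedDeriv k (fun t : ℂ => Complex.exp (n * t) * t ^ m) (Complex.log z) := by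
  induction k with
  | zero =>
    intro z hz
    simp only [Function.iterate_zero, id_eq, iteratedDeriv_zero]
    rw [Complex.cpow_def_of_ne_zero (Complex.slitPlane_ne_zero hz)]
    ring_nf
  | succ k ih =>
    intro z hz
    rw [Function.iterate_succ_apply']
    have hEq : (fun w : ℂ =>
        ((fun g : ℂ → ℂ => fun z => z * deriv g z)^[k]
          (fun z : ℂ => z ^ n * Complex.log z ^ m)) w)
        =ᶠ[nhds z] fun w =>
          iteratedDeriv k (fun t : ℂ => Complex.exp (n * t) * t ^ m) (Complex.log w) := by
      filter_upwards [Complex.isOpen_slitPlane.mem_nhds hz] with w hw using ih w hw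
    have hzne : z ≠ 0 := Complex.slitPlane_ne_zero hz
    have hdiff : Differentiable ℂ
        (iteratedDeriv k (fun t : ℂ => Complex.exp (n * t) * t ^ m)) :=
      ((g_diff n m).contDiff (n := (⊤ : ℕ∞))).differentiable_iteratedDeriv k
        (by exact_mod_cast lt_top_iff_ne_top.mpr (by simp))
    have hcomp : HasDerivAt
        (fun w => iteratedDeriv k (fun t : ℂ => Complex.exp (n * t) * t ^ m) (Complex.log w))
        (deriv (iteratedDeriv k (fun t : ℂ => Complex.exp (n * t) * t ^ m)) (Complex.log z) * z⁻¹)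
        z :=
      ((hdiff (Complex.log z)).hasDerivAt).comp z (Complex.hasDerivAt_log hz)
    rw [hEq.deriv_eq, hcomp.deriv]
    rw [iteratedDeriv_succ]
    field_simp

/-- Analytic counterpart of `e^{y·x·d/dx} f(x) = f(x e^y)` for
  `f(z) = zⁿ (log z)ᵐ` (principal branches): for real `x > 0` and any `y ∈ ℂ`,
  the series `∑ₖ (yᵏ/k!) (Eᵏ f)(x)`, where `E` is the Euler operator
  `(E g)(z) = z g′(z)`, converges absolutely with sum
  `xⁿ e^{ny} (log x + y)ᵐ`. -/
theorem euler_operator_exponential_power_log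
    (n : ℂ) (m : ℕ) (x : ℝ) (hx : 0 < x) (y : ℂ) :
    Summable (fun k : ℕ =>
        ‖y ^ k / (k.factorial : ℂ) *
          ((fun g : ℂ → ℂ => fun z => z * deriv g z)^[k]
              (fun z : ℂ => z ^ n * Complex.log z ^ m)) (x : ℂ)‖) ∧
      HasSum (fun k : ℕ =>
          y ^ k / (k.factorial : ℂ) *
            ((fun g : ℂ → ℂ => fun z => z * deriv g z)^[k]
                (fun z : ℂ => z ^ n * Complex.log z ^ m)) (x : ℂ))
        ((x : ℂ) ^ n * Complex.exp (n * y) * (Complex.log (x : ℂ) + y) ^ m) := by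
  set g : ℂ → ℂ := fun t : ℂ => Complex.exp (n * t) * t ^ m with hg
  have hxs : (x : ℂ) ∈ Complex.slitPlane := by
    rw [Complex.mem_slitPlane_iff]
    left; exact_mod_cast hx
  have hxne : (x : ℂ) ≠ 0 := Complex.slitPlane_ne_zero hxs
  set c : ℂ := Complex.log (x : ℂ) with hc
  have key : ∀ k : ℕ,
      y ^ k / (k.factorial : ℂ) *
        ((fun g : ℂ → ℂ => fun z => z * deriv g z)^[k]
            (fun z : ℂ => z ^ n * Complex.log z ^ m)) (x : ℂ)
      = ((k.factorial : ℂ))⁻¹ • y ^ k • iteratedDeriv k g c := by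
    intro k
    rw [iter_eq n m k (x : ℂ) hxs]
    simp [smul_eq_mul, div_eq_mul_inv]
    ring
  have hval : g (c + y) = (x : ℂ) ^ n * Complex.exp (n * y) * (Complex.log (x : ℂ) + y) ^ m := by
    simp only [hg, hc, mul_add, Complex.exp_add]
    rw [Complex.cpow_def_of_ne_zero hxne, mul_comm (Complex.log (x : ℂ)) n]
  have hsum : HasSum (fun k : ℕ => ((k.factorial : ℂ))⁻¹ • y ^ k • iteratedDeriv k g c)
      ((x : ℂ) ^ n * Complex.exp (n * y) * (Complex.log (x : ℂ) + y) ^ m) := by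
    have h0 := Complex.hasSum_taylorSeries_of_entire (g_diff n m) c (c + y)
    rw [← hg] at h0
    simp only [add_sub_cancel_left] at h0
    rw [← hval]; exact h0
  constructor
  · -- absolute convergence
    -- use the Taylor series at a point of larger modulus
    set R : ℝ := 2 * ‖y‖ + 1 with hR
    have hR1 : 0 < R := by positivity
    have hsumR : HasSum (fun k : ℕ => ((k.factorial : ℂ))⁻¹ • (R : ℂ) ^ k • iteratedDeriv k g c)
        (g (c + R)) := by
      have h0 := Complex.hasSum_taylorSeries_of_entire (g_diff n m) c (c + R)
      rw [← hg] at h0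
      simpa only [add_sub_cancel_left] using h0
    have hbdd : BddAbove (Set.range fun k : ℕ =>
        ‖((k.factorial : ℂ))⁻¹ • (R : ℂ) ^ k • iteratedDeriv k g c‖) :=
      (hsumR.summable.tendsto_atTop_zero.norm).bddAbove_range
    obtain ⟨C, hC⟩ := hbdd
    have hCk : ∀ k : ℕ, ‖((k.factorial : ℂ))⁻¹ • iteratedDeriv k g c‖ * R ^ k ≤ C := by
      intro k
      have h2 := hC (Set.mem_range_self k)
      calc ‖((k.factorial : ℂ))⁻¹ • iteratedDeriv k g c‖ * R ^ k
          = ‖((k.factorial : ℂ))⁻¹ • (R : ℂ) ^ k • iteratedDeriv k g c‖ := by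
            rw [norm_smul, norm_smul, norm_smul, norm_pow, Complex.norm_real,
              Real.norm_eq_abs, abs_of_pos hR1]
            ring
        _ ≤ C := h2
    refine Summable.of_nonneg_of_le (f := fun k => C * (‖y‖ / R) ^ k)
      (fun k => norm_nonneg _) ?_ ?_
    · intro k
      rw [key k]
      have h1 : ‖((k.factorial : ℂ))⁻¹ • y ^ k • iteratedDeriv k g c‖
          = (‖((k.factorial : ℂ))⁻¹ • iteratedDeriv k g c‖ * R ^ k) * (‖y‖ / R) ^ k := by
        rw [norm_smul, norm_smul, norm_smul, div_pow, norm_pow]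
        field_simp
      rw [h1]
      exact mul_le_mul_of_nonneg_right (hCk k) (by positivity)
    · apply Summable.mul_left
      apply summable_geometric_of_lt_one (by positivity)
      rw [div_lt_one hR1, hR]
      linarith [norm_nonneg y]
  · refine HasSum.congr_fun hsum fun k => key k
end
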